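/- Assume the values h_k over slots k with Π(k) ≠ 0 are pairwise distinct. If (q, p) is a maximizer of Problem (P), then q_k = 0 for every k ∈ D^c; that is, wireless energy transfer power can be nonzero only at causally dominating slots. -/
import Mathlib


noncomputable section

/-- The information sub-channel set `N_k^I = {0,…,N} \ {Π(k)}`. -/
def NI (N : ℕ) (Pi : ℕ → ℕ) (k : ℕ) : Finset ℕ := Finset.Icc 0 N \ {Pi k}

/-- Feasibility for Problem (P) with a single WET sub-channel `Π(k)` per slot. -/
def FeasibleP (K N : ℕ) (h : ℕ → ℕ → ℝ) (Q ζ B1 : ℝ) (Pi : ℕ → ℕ)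
    (q : ℕ → ℝ) (p : ℕ → ℕ → ℝ) : Prop :=
  (∀ k ∈ Finset.Icc 1 K, 0 ≤ q k) ∧
  (∀ k ∈ Finset.Icc 1 K, Pi k = 0 → q k = 0) ∧
  (∀ k ∈ Finset.Icc 1 K, ∀ n ∈ NI N Pi k, 0 ≤ p k n) ∧
  (∑ k ∈ Finset.Icc 1 K, q k ≤ (K : ℝ) * Q) ∧
  (∀ i ∈ Finset.Icc 1 K,
    ∑ k ∈ Finset.Icc 1 i, ∑ n ∈ NI N Pi k, p k n ≤
      ζ * ∑ k ∈ Finset.Icc 1 (i - 1), h k (Pi k) * q k + B1)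

/-- Achievable rate for Problem (P). -/
def RateP (K N : ℕ) (g : ℕ → ℕ → ℝ) (Γσ : ℝ) (Pi : ℕ → ℕ) (p : ℕ → ℕ → ℝ) : ℝ :=
  (1 / ((K : ℝ) * N)) * ∑ k ∈ Finset.Icc 1 K, ∑ n ∈ NI N Pi k,
    Real.logb 2 (1 + g k n * p k n / Γσ)

open Classical in
/-- The set `D` of causally dominating slots. -/
def Dset (K : ℕ) (h : ℕ → ℕ → ℝ) (Pi : ℕ → ℕ) : Finset ℕ :=
  (Finset.Icc 1 (K - 1)).filter
    (fun k => Pi k ≠ 0 ∧ ∀ j, 1 ≤ j → j < k → h j (Pi j) < h k (Pi k))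

end

theorem stmt2
    (K N : ℕ) (hK : 2 ≤ K) (hN : 2 ≤ N)
    (h g : ℕ → ℕ → ℝ)
    (hpos : ∀ k ∈ Finset.Icc 1 K, ∀ n ∈ Finset.Icc 1 N, 0 < h k n ∧ 0 < g k n)
    (hzero : ∀ k, h k 0 = 0 ∧ g k 0 = 0)
    (Q ζ B1 Γσ : ℝ) (hQ : 0 < Q) (hζ : 0 < ζ) (hB1 : 0 ≤ B1) (hΓσ : 0 < Γσ)
    (Pi : ℕ → ℕ) (hPiK : Pi K = 0) (hPiR : ∀ k ∈ Finset.Icc 1 K, Pi k ≤ N)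
    (hdist : ∀ k ∈ Finset.Icc 1 K, ∀ k' ∈ Finset.Icc 1 K,
      Pi k ≠ 0 → Pi k' ≠ 0 → k ≠ k' → h k (Pi k) ≠ h k' (Pi k'))
    (q : ℕ → ℝ) (p : ℕ → ℕ → ℝ)
    (hfeas : FeasibleP K N h Q ζ B1 Pi q p)
    (hopt : ∀ q' p', FeasibleP K N h Q ζ B1 Pi q' p' →
      RateP K N g Γσ Pi p' ≤ RateP K N g Γσ Pi p)
    :
    ∀ k ∈ Finset.Icc 1 K, k ∉ Dset K h Pi → q k = 0 := by
  intro k hk hkD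
  by_contra hqk
  obtain ⟨hq0, hqpi, hp0, hsumQ, hcons⟩ := hfeas
  have hqk_pos : 0 < q k := lt_of_le_of_ne (hq0 k hk) (Ne.symm hqk)
  have hPik : Pi k ≠ 0 := fun h0 => hqk (hqpi k hk h0)
  have hkK : k ≠ K := fun hh => hPik (hh ▸ hPiK)
  have hk1 : 1 ≤ k := (Finset.mem_Icc.mp hk).1
  have hkK2 : k ≤ K := (Finset.mem_Icc.mp hk).2
  have hkK1 : k ≤ K - 1 := by omega
  have hkmem : k ∈ Finset.Icc 1 (K - 1) := Finset.mem_Icc.mpr ⟨hk1, hkK1⟩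
  have hhk_pos : 0 < h k (Pi k) :=
    (hpos k hk (Pi k) (Finset.mem_Icc.mpr ⟨by omega, hPiR k hk⟩)).1
  -- extract a dominating earlier slot j
  simp only [Dset, Finset.mem_filter, hkmem, true_and, not_and, not_forall] at hkD
  push_neg at hkD
  obtain ⟨j, hj1, hjk, hjh⟩ := hkD hPik
  have hjK : j ∈ Finset.Icc 1 K := Finset.mem_Icc.mpr ⟨hj1, by omega⟩
  have hPij : Pi j ≠ 0 := by
    intro h0
    rw [h0, (hzero j).1] at hjh
    exact absurd hjh (not_le.mpr hhk_pos)
  have hlt : h k (Pi k) < h j (Pi j) :=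
    lt_of_le_of_ne hjh (hdist k hk j hjK hPik hPij (by omega))
  have hjne : j ≠ k := by omega
  set δ : ℝ := ζ * (q k * (h j (Pi j) - h k (Pi k))) with hδdef
  have hδpos : 0 < δ := by
    apply mul_pos hζ
    exact mul_pos hqk_pos (by linarith)
  -- modified allocations
  set q' : ℕ → ℝ := fun i => q i + ((if i = j then q k else 0) + if i = k then -q k else 0)
    with hq'def
  set p' : ℕ → ℕ → ℝ := fun i n => p i n + (if i = K then (if n = 1 then δ else 0) else 0)
    with hp'def
  have hq'j : q' j = q j + q k := by simp [hq'def, hjne]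
  have hq'k : q' k = 0 := by simp [hq'def, hjne.symm]
  have hq'other : ∀ i, i ≠ j → i ≠ k → q' i = q i := by
    intro i h1 h2; simp [hq'def, h1, h2]
  -- weighted sum identity
  have sumq : ∀ (s : Finset ℕ) (w : ℕ → ℝ),
      ∑ i ∈ s, w i * q' i
        = ∑ i ∈ s, w i * q i
          + ((if j ∈ s then w j * q k else 0) + if k ∈ s then w k * (-q k) else 0) := by
    intro s w
    simp only [hq'def, mul_add, mul_ite, mul_zero, Finset.sum_add_distrib,
      Finset.sum_ite_eq']
  have sumq1 : ∑ i ∈ Finset.Icc 1 K, q' i = ∑ i ∈ Finset.Icc 1 K, q i := by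
    have := sumq (Finset.Icc 1 K) (fun _ => 1)
    simp only [one_mul] at this
    rw [this, if_pos hjK, if_pos hk]
    ring
  have h1mem : (1 : ℕ) ∈ NI N Pi K := by
    simp only [NI, Finset.mem_sdiff, Finset.mem_Icc, Finset.mem_singleton, hPiK]
    omega
  have inner_p' : ∀ i, ∑ n ∈ NI N Pi i, p' i n
      = ∑ n ∈ NI N Pi i, p i n + (if i = K then δ else 0) := by
    intro i
    by_cases hiK : i = K
    · subst hiK
      simp [hp'def, Finset.sum_add_distrib, Finset.sum_ite_eq', h1mem]
    · simp [hp'def, hiK]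
  have sump : ∀ m, ∑ i ∈ Finset.Icc 1 m, ∑ n ∈ NI N Pi i, p' i n
      = ∑ i ∈ Finset.Icc 1 m, ∑ n ∈ NI N Pi i, p i n
        + (if K ∈ Finset.Icc 1 m then δ else 0) := by
    intro m
    simp only [inner_p', Finset.sum_add_distrib]
    rw [Finset.sum_ite_eq' (Finset.Icc 1 m) K (fun _ => δ)]
  -- feasibility of (q', p')
  have hfeas' : FeasibleP K N h Q ζ B1 Pi q' p' := by
    refine ⟨?_, ?_, ?_, ?_, ?_⟩
    · intro i hi
      by_cases h1 : i = j
      · subst h1; rw [hq'j]; have := hq0 i hi; linarith [hqk_pos.le]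
      · by_cases h2 : i = k
        · subst h2; rw [hq'k]
        · rw [hq'other i h1 h2]; exact hq0 i hi
    · intro i hi hPi0
      by_cases h1 : i = j
      · exact absurd (h1 ▸ hPi0) hPij
      · by_cases h2 : i = k
        · subst h2; exact hq'k
        · rw [hq'other i h1 h2]; exact hqpi i hi hPi0
    · intro i hi n hn
      have := hp0 i hi n hn
      simp only [hp'def]
      have : (0:ℝ) ≤ (if i = K then (if n = 1 then δ else 0) else 0) := by
        split_ifs <;> simp [hδpos.le]
      linarith [hp0 i hi n hn]
    · rw [sumq1]; exact hsumQ
    · intro i hi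
      obtain ⟨hi1, hiK⟩ := Finset.mem_Icc.mp hi
      rw [sump i, sumq (Finset.Icc 1 (i-1)) (fun m => h m (Pi m))]
      have hbase := hcons i hi
      have key : (if K ∈ Finset.Icc 1 i then δ else 0)
          ≤ ζ * ((if j ∈ Finset.Icc 1 (i-1) then h j (Pi j) * q k else 0)
            + if k ∈ Finset.Icc 1 (i-1) then h k (Pi k) * (-q k) else 0) := by
        by_cases hiKeq : i = K
        · subst hiKeq
          rw [if_pos (Finset.mem_Icc.mpr ⟨by omega, le_refl _⟩),
            if_pos (Finset.mem_Icc.mpr ⟨hj1, by omega⟩),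
            if_pos (Finset.mem_Icc.mpr ⟨hk1, by omega⟩)]
          rw [hδdef]; ring_nf; rfl
        · rw [if_neg (by simp only [Finset.mem_Icc]; omega)]
          by_cases hkm : k ∈ Finset.Icc 1 (i-1)
          · have hjm : j ∈ Finset.Icc 1 (i-1) := by
              simp only [Finset.mem_Icc] at hkm ⊢; omega
            rw [if_pos hkm, if_pos hjm]
            have : 0 ≤ (h j (Pi j) - h k (Pi k)) * q k :=
              mul_nonneg (by linarith) hqk_pos.le
            nlinarith
          · rw [if_neg hkm]
            split_ifs with hjm
            · have : 0 ≤ h j (Pi j) * q k :=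
                mul_nonneg (by linarith) hqk_pos.le
              nlinarith
            · simp
      have := mul_comm ζ 0
      calc ∑ i' ∈ Finset.Icc 1 i, ∑ n ∈ NI N Pi i', p i' n
            + (if K ∈ Finset.Icc 1 i then δ else 0)
          ≤ (ζ * ∑ i' ∈ Finset.Icc 1 (i-1), h i' (Pi i') * q i' + B1)
            + ζ * ((if j ∈ Finset.Icc 1 (i-1) then h j (Pi j) * q k else 0)
              + if k ∈ Finset.Icc 1 (i-1) then h k (Pi k) * (-q k) else 0) := by
            exact add_le_add hbase key
        _ = ζ * (∑ i' ∈ Finset.Icc 1 (i-1), h i' (Pi i') * q i'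
              + ((if j ∈ Finset.Icc 1 (i-1) then h j (Pi j) * q k else 0)
                + if k ∈ Finset.Icc 1 (i-1) then h k (Pi k) * (-q k) else 0)) + B1 := by
            ring
  -- strict rate improvement
  have hg0 : ∀ i ∈ Finset.Icc 1 K, ∀ n ∈ NI N Pi i, 0 ≤ g i n := by
    intro i hi n hn
    simp only [NI, Finset.mem_sdiff, Finset.mem_Icc] at hn
    rcases Nat.eq_zero_or_pos n with h0 | hpos'
    · rw [h0, (hzero i).2]
    · exact (hpos i hi n (Finset.mem_Icc.mpr ⟨hpos', hn.1.2⟩)).2.le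
  have hrate : RateP K N g Γσ Pi p < RateP K N g Γσ Pi p' := by
    unfold RateP
    apply mul_lt_mul_of_pos_left _ (by positivity)
    apply Finset.sum_lt_sum
    · intro i hi
      apply Finset.sum_le_sum
      intro n hn
      have hp_nn := hp0 i hi n hn
      have hg_nn := hg0 i hi n hn
      have harg : 0 < 1 + g i n * p i n / Γσ := by positivity
      apply Real.logb_le_logb_of_le one_lt_two harg
      have : p i n ≤ p' i n := by
        simp only [hp'def]
        have : (0:ℝ) ≤ (if i = K then (if n = 1 then δ else 0) else 0) := by
          split_ifs <;> simp [hδpos.le]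
        linarith
      gcongr
    · refine ⟨K, Finset.mem_Icc.mpr ⟨by omega, le_refl K⟩, ?_⟩
      have hKmem : K ∈ Finset.Icc 1 K := Finset.mem_Icc.mpr ⟨by omega, le_refl K⟩
      apply Finset.sum_lt_sum
      · intro n hn
        have hp_nn := hp0 K hKmem n hn
        have hg_nn := hg0 K hKmem n hn
        have harg : 0 < 1 + g K n * p K n / Γσ := by positivity
        apply Real.logb_le_logb_of_le one_lt_two harg
        have : p K n ≤ p' K n := by
          simp only [hp'def, if_pos rfl]
          split_ifs <;> linarith [hδpos.le]
        gcongr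
      · refine ⟨1, h1mem, ?_⟩
        have hg1 : 0 < g K 1 :=
          (hpos K hKmem 1 (Finset.mem_Icc.mpr ⟨le_refl _, by omega⟩)).2
        have hp_nn := hp0 K hKmem 1 h1mem
        have harg : 0 < 1 + g K 1 * p K 1 / Γσ := by positivity
        apply Real.logb_lt_logb one_lt_two harg
        have hpp : p K 1 < p' K 1 := by
          simp [hp'def]; linarith
        gcongr
  exact absurd (hopt q' p' hfeas') (not_le.mpr hrate)
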